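/- arXiv:1412.3934 — 3 statements merged into one kernel-verified Lean document; each statement's English description precedes it below -/
import Mathlib

section
/- Let X be a self-similar process with index κ > 0 such that X(1) has distribution function G in the Gumbel max-domain of attraction with auxiliary function w. Then the mean sojourn time L(u) = ∫_0^1 1{X(t) > u} dt satisfies E[L(u)] = (1/(κ·u·w(u)))·(1-G(u))·(1+o(1)) as u → ∞. -/
/-!
By Fubini and self-similarity, `E L(u) = ∫₀¹ (1 - G (u t^(-κ))) dt`. The substitution
`u t^(-κ) = u + x / w(u)` turns this into
`(κ u w(u))⁻¹ ∫₀^∞ (1 + x / (u w(u)))^(-1/κ - 1) (1 - G (u + x / w(u))) dx`,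
and after division by `1 - G(u)` the integrand tends to `exp (-x)` because `u w(u) → ∞`.
Dominated convergence applies since, far out, a step from `v` to `v + 2 / w(v)` divides `1 - G`
by at least `4` while `w` at most halves, which gives the integrable bound `16 / (1 + x²)`.
-/

open MeasureTheory Filter Set Real Topology ProbabilityTheory

theorem le_div_four_pow_of_step {f w : ℝ → ℝ} {c U : ℝ} (hw : ∀ u, 0 < w u)
    (hf_anti : Antitone f) (hc : 0 ≤ c)
    (hstep : ∀ v ≥ U, f (v + c / w v) ≤ f v / 4 ∧ w v / 2 ≤ w (v + c / w v)) (k : ℕ) :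
    ∀ u ≥ U, f (u + (2 ^ k - 1) * c / w u) ≤ f u / 4 ^ k := by
  induction k with
  | zero => intro u _; simp
  | succ k ih =>
    intro u hu
    set v := u + c / w u
    have hv : U ≤ v := hu.trans (le_add_of_nonneg_right (div_nonneg hc (hw u).le))
    obtain ⟨hfv, hwv⟩ := hstep u hu
    -- `w` at most halves over one step, so the remaining steps from `v` are at most twice as long
    have hreach : v + (2 ^ k - 1) * c / w v ≤ u + (2 ^ (k + 1) - 1) * c / w u := by
      have hlen : (2 ^ k - 1) * c / w v ≤ (2 ^ k - 1) * c / (w u / 2) :=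
        div_le_div_of_nonneg_left (mul_nonneg (sub_nonneg.2 (one_le_pow₀ one_le_two)) hc)
          (by linarith [hw u]) hwv
      have : u + c / w u + (2 ^ k - 1) * c / (w u / 2) = u + (2 ^ (k + 1) - 1) * c / w u := by
        field_simp
        ring
      linarith
    calc f (u + (2 ^ (k + 1) - 1) * c / w u) ≤ f (v + (2 ^ k - 1) * c / w v) := hf_anti hreach
      _ ≤ f v / 4 ^ k := ih v hv
      _ ≤ f u / 4 / 4 ^ k := by gcongr
      _ = f u / 4 ^ (k + 1) := by rw [pow_succ, div_div, mul_comm]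

theorem inv_four_pow_le_of_lt_two_pow {x : ℝ} {k : ℕ} (hx : 0 ≤ x)
    (hk : x / 2 + 1 < 2 ^ (k + 1)) :
    (4 ^ k)⁻¹ ≤ 16 * (1 + x ^ 2)⁻¹ := by
  have h4 : (4 : ℝ) ^ k = (2 ^ k) ^ 2 := by rw [← pow_mul, mul_comm, pow_mul]; norm_num
  have hlt : x + 2 < 4 * 2 ^ k := by rw [pow_succ] at hk; linarith
  rw [← div_eq_mul_inv, le_div_iff₀ (by positivity), h4, inv_mul_le_iff₀ (by positivity)]
  nlinarith

theorem integral_Ioo_comp_rpow_neg (g : ℝ → ℝ) {κ a : ℝ} (hκ : 0 < κ) (ha : 0 < a) :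
    ∫ t in Ioo 0 1, g (t ^ (-κ)) =
      (κ * a)⁻¹ * ∫ x in Ioi 0, (1 + x / a) ^ (-κ⁻¹ - 1) * g (1 + x / a) := by
  set φ : ℝ → ℝ := fun x => (1 + x / a) ^ (-κ⁻¹)
  have hr : -κ⁻¹ < 0 := neg_neg_of_pos (inv_pos.2 hκ)
  have hbase : ∀ x ∈ Ioi (0 : ℝ), 1 < 1 + x / a := fun x (hx : 0 < x) => by
    have := div_pos hx ha
    linarith
  have hderiv : ∀ x ∈ Ioi (0 : ℝ),
      HasDerivWithinAt φ (1 / a * -κ⁻¹ * (1 + x / a) ^ (-κ⁻¹ - 1)) (Ioi 0) x := fun x hx =>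
    ((((hasDerivAt_id x).div_const a).const_add 1).rpow_const
      (Or.inl (zero_lt_one.trans (hbase x hx)).ne')).hasDerivWithinAt
  have hanti : StrictAntiOn φ (Ioi 0) := fun x hx y hy hxy =>
    strictAntiOn_rpow_Ioi_of_exponent_neg hr (zero_lt_one.trans (hbase x hx))
      (zero_lt_one.trans (hbase y hy)) (by simp only [add_lt_add_iff_left]; gcongr)
  have hφ : ∀ x ∈ Ioi (0 : ℝ), φ x ^ (-κ) = 1 + x / a := fun x hx => by
    rw [← rpow_mul (zero_lt_one.trans (hbase x hx)).le, neg_mul_neg, inv_mul_cancel₀ hκ.ne',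
      rpow_one]
  have himg : φ '' Ioi 0 = Ioo 0 1 := by
    refine Subset.antisymm ?_ fun t ⟨ht0, ht1⟩ => ?_
    · rintro _ ⟨x, hx, rfl⟩
      exact ⟨rpow_pos_of_pos (zero_lt_one.trans (hbase x hx)) _,
        rpow_lt_one_of_one_lt_of_neg (hbase x hx) hr⟩
    · have ht : 1 < t ^ (-κ) := one_lt_rpow_of_pos_of_lt_one_of_neg ht0 ht1 (neg_neg_of_pos hκ)
      refine ⟨a * (t ^ (-κ) - 1), mul_pos ha (sub_pos.2 ht), ?_⟩
      simp only [φ]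
      rw [mul_div_cancel_left₀ _ ha.ne', add_sub_cancel, ← rpow_mul ht0.le, neg_mul_neg,
        mul_inv_cancel₀ hκ.ne', rpow_one]
  rw [← himg, integral_image_eq_integral_abs_deriv_smul measurableSet_Ioi hderiv hanti.injOn,
    ← integral_const_mul]
  refine setIntegral_congr_fun measurableSet_Ioi fun x hx => ?_
  have hpos : 0 < (1 + x / a) ^ (-κ⁻¹ - 1) := rpow_pos_of_pos (zero_lt_one.trans (hbase x hx)) _
  rw [hφ x hx, smul_eq_mul, abs_mul, abs_mul, abs_of_pos hpos, abs_of_pos (one_div_pos.2 ha),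
    abs_neg, abs_of_pos (inv_pos.2 hκ), mul_inv]
  field_simp

/-- `f = 1 - G` for `G` in the Gumbel max-domain of attraction with auxiliary function `w`. -/
def IsGumbelTail (f w : ℝ → ℝ) : Prop :=
  ∀ x : ℝ, Tendsto (fun u => f (u + x / w u) / f u) atTop (𝓝 (exp (-x)))

namespace IsGumbelTail

variable {f w : ℝ → ℝ}

theorem pos (h : IsGumbelTail f w) (hf_nonneg : ∀ u, 0 ≤ f u) (hf_anti : Antitone f) (u : ℝ) :
    0 < f u := by
  obtain ⟨v, hv, huv⟩ :=
    (((h 0).eventually_const_lt (exp_pos _)).and (eventually_ge_atTop u)).exists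
  have hfv : f v ≠ 0 := fun h0 => by simp [h0] at hv
  exact ((hf_nonneg v).lt_of_ne' hfv).trans_le (hf_anti huv)

theorem tendsto_mul_atTop (h : IsGumbelTail f w) (hw : ∀ u, 0 < w u) (hf_pos : ∀ u, 0 < f u)
    (hf_anti : Antitone f) (hf0 : Tendsto f atTop (𝓝 0)) :
    Tendsto (fun u => u * w u) atTop atTop := by
  refine tendsto_atTop.2 fun b => ?_
  have hf0' : Tendsto f atTop (𝓝[>] 0) := tendsto_nhdsWithin_iff.2 ⟨hf0, .of_forall hf_pos⟩
  have hlarge : Tendsto (fun u => f 0 / f u) atTop atTop := by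
    simpa only [div_eq_mul_inv, Function.comp_def] using
      (tendsto_inv_nhdsGT_zero.comp hf0').const_mul_atTop (hf_pos 0)
  have hsmall : ∀ᶠ u in atTop, f (u + -b / w u) / f u < exp b + 1 :=
    (h (-b)).eventually_lt_const (by simp)
  filter_upwards [hsmall, hlarge.eventually_gt_atTop (exp b + 1), eventually_ge_atTop 0]
    with u hshifted hquot hu
  -- otherwise `u - b / w u ≤ 0`, so the ratio at `x = -b` is at least `f 0 / f u`
  by_contra! hlt
  have hneg : u + -b / w u ≤ 0 := by
    rw [neg_div, ← sub_eq_add_neg, sub_nonpos, le_div_iff₀ (hw u)]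
    exact hlt.le
  have := div_le_div_of_nonneg_right (hf_anti hneg) (hf_pos u).le
  linarith

theorem eventually_half_le (h : IsGumbelTail f w) (hw : ∀ u, 0 < w u) (hf_pos : ∀ u, 0 < f u)
    (hf_anti : Antitone f) {x : ℝ} (hx : 0 ≤ x) :
    ∀ᶠ u in atTop, w u / 2 ≤ w (u + x / w u) := by
  set σ := fun u => u + x / w u
  have hσ : Tendsto σ atTop atTop :=
    tendsto_atTop_mono (fun u => le_add_of_nonneg_right (div_nonneg hx (hw u).le)) tendsto_id
  have hstep : ∀ᶠ u in atTop, exp (-(3 / 2)) < f (σ u + 1 / w (σ u)) / f (σ u) :=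
    hσ.eventually ((h 1).eventually_const_lt (exp_lt_exp.2 (by norm_num)))
  have hratio : Tendsto (fun u => f (u + (x + 2) / w u) / f (σ u)) atTop (𝓝 (exp (-2))) := by
    have := (h (x + 2)).div (h x) (exp_pos _).ne'
    rw [← exp_sub, show -(x + 2) - -x = -2 by ring] at this
    exact this.congr fun u => div_div_div_cancel_right₀ (hf_pos u).ne' _ _
  -- if `w (σ u) < w u / 2`, one step of length `1 / w (σ u)` from `σ u` passes two steps of
  -- length `1 / w u`, so a ratio near `exp (-1)` would be at most one near `exp (-2)`
  have hsep : exp (-2) < exp (-(3 / 2)) := exp_lt_exp.2 (by norm_num)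
  filter_upwards [hstep, hratio.eventually_lt_const hsep] with u hstep hratio
  by_contra! hlt
  have hle : u + (x + 2) / w u ≤ σ u + 1 / w (σ u) := by
    have : 2 / w u ≤ 1 / w (σ u) := by
      rw [div_le_div_iff₀ (hw u) (hw _)]
      linarith
    simp only [σ, add_div]
    linarith
  have := div_le_div_of_nonneg_right (hf_anti hle) (hf_pos (σ u)).le
  linarith

theorem eventually_le_mul_inv_one_add_sq (h : IsGumbelTail f w) (hw : ∀ u, 0 < w u)
    (hf_pos : ∀ u, 0 < f u) (hf_anti : Antitone f) :
    ∀ᶠ u in atTop, ∀ x, 0 ≤ x → f (u + x / w u) ≤ 16 * (1 + x ^ 2)⁻¹ * f u := by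
  have hdrop : ∀ᶠ v in atTop, f (v + 2 / w v) ≤ f v / 4 := by
    have : exp (-2) < 1 / 4 := by
      rw [exp_neg, one_div]
      refine inv_strictAnti₀ (by norm_num) ?_
      have := add_one_lt_exp one_ne_zero
      rw [show (2 : ℝ) = 1 + 1 by norm_num, exp_add]
      nlinarith
    filter_upwards [(h 2).eventually_lt_const this] with v hv
    rw [div_lt_iff₀ (hf_pos v)] at hv
    linarith
  obtain ⟨U, hU⟩ :=
    eventually_atTop.1 (hdrop.and (h.eventually_half_le hw hf_pos hf_anti zero_le_two))
  filter_upwards [eventually_ge_atTop U] with u hu x hx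
  obtain ⟨k, hk_le, hk_lt⟩ :=
    exists_nat_pow_near (by linarith : (1 : ℝ) ≤ x / 2 + 1) one_lt_two
  have hreach : u + (2 ^ k - 1) * 2 / w u ≤ u + x / w u := by
    gcongr
    · exact (hw u).le
    · linarith
  calc f (u + x / w u) ≤ f (u + (2 ^ k - 1) * 2 / w u) := hf_anti hreach
    _ ≤ f u / 4 ^ k := le_div_four_pow_of_step hw hf_anti zero_le_two hU k u hu
    _ ≤ 16 * (1 + x ^ 2)⁻¹ * f u := by
      rw [div_eq_inv_mul]
      gcongr
      · exact (hf_pos u).le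
      · exact inv_four_pow_le_of_lt_two_pow hx hk_lt

theorem tendsto_integral_rpow_mul_div (h : IsGumbelTail f w) (hw : ∀ u, 0 < w u)
    (hf_pos : ∀ u, 0 < f u) (hf_anti : Antitone f) (hf0 : Tendsto f atTop (𝓝 0))
    {p : ℝ} (hp : p ≤ 0) :
    Tendsto (fun u => ∫ x in Ioi 0, (1 + x / (u * w u)) ^ p * (f (u + x / w u) / f u))
      atTop (𝓝 1) := by
  have huw := h.tendsto_mul_atTop hw hf_pos hf_anti hf0
  have hf_meas := hf_anti.measurable
  suffices Tendsto (fun u => ∫ x in Ioi 0, (1 + x / (u * w u)) ^ p * (f (u + x / w u) / f u))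
      atTop (𝓝 (∫ x in Ioi 0, exp (-x))) by rwa [integral_exp_neg_Ioi_zero] at this
  refine tendsto_integral_filter_of_dominated_convergence (fun x => 16 * (1 + x ^ 2)⁻¹)
    (.of_forall fun u => (by fun_prop : Measurable _).aestronglyMeasurable) ?_
    (integrable_inv_one_add_sq.const_mul 16).integrableOn ?_
  · filter_upwards [h.eventually_le_mul_inv_one_add_sq hw hf_pos hf_anti,
      huw.eventually_gt_atTop 0] with u hdom huw0
    refine (ae_restrict_iff' measurableSet_Ioi).2 (.of_forall fun x (hx : 0 < x) => ?_)
    have hpow : (1 + x / (u * w u)) ^ p ≤ 1 :=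
      rpow_le_one_of_one_le_of_nonpos (le_add_of_nonneg_right (by positivity)) hp
    have hratio : f (u + x / w u) / f u ≤ 16 * (1 + x ^ 2)⁻¹ :=
      (div_le_iff₀ (hf_pos u)).2 (hdom x hx.le)
    rw [norm_of_nonneg (by have := hf_pos u; have := hf_pos (u + x / w u); positivity)]
    calc _ ≤ 1 * (f (u + x / w u) / f u) := by
          gcongr
          exact (div_pos (hf_pos _) (hf_pos u)).le
      _ ≤ _ := by rw [one_mul]; exact hratio
  · refine ae_of_all _ fun x => ?_
    have hbase : Tendsto (fun u => 1 + x / (u * w u)) atTop (𝓝 1) := by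
      simpa using (tendsto_const_nhds.div_atTop huw).const_add 1
    have hpow : Tendsto (fun u => (1 + x / (u * w u)) ^ p) atTop (𝓝 1) := by
      simpa [Function.comp_def] using
        (continuousAt_rpow_const 1 p (Or.inl one_ne_zero)).tendsto.comp hbase
    simpa using hpow.mul (h x)

theorem tendsto_integral_Ioo_comp_rpow_neg (h : IsGumbelTail f w) (hw : ∀ u, 0 < w u)
    (hf_pos : ∀ u, 0 < f u) (hf_anti : Antitone f)
    (hf0 : Tendsto f atTop (𝓝 0)) {κ : ℝ} (hκ : 0 < κ) :
    Tendsto (fun u => (∫ t in Ioo 0 1, f (u * t ^ (-κ))) * (κ * u * w u) / f u)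
      atTop (𝓝 1) := by
  have hp : -κ⁻¹ - 1 ≤ 0 := by linarith [inv_pos.2 hκ]
  refine (h.tendsto_integral_rpow_mul_div hw hf_pos hf_anti hf0 hp).congr' ?_
  filter_upwards [eventually_gt_atTop 0] with u hu
  have huw : 0 < u * w u := mul_pos hu (hw u)
  have hshift : ∀ x, u * (1 + x / (u * w u)) = u + x / w u := fun x => by field_simp
  rw [integral_Ioo_comp_rpow_neg (fun s => f (u * s)) hκ huw]
  have hcancel : (κ * (u * w u))⁻¹ * (κ * u * w u) = 1 := by
    rw [mul_assoc κ]; exact inv_mul_cancel₀ (mul_pos hκ huw).ne'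
  simp only [hshift, ← mul_div_assoc, integral_div]
  rw [mul_right_comm, hcancel, one_mul]

end IsGumbelTail

theorem integral_sojourn_eq_integral_one_sub_cdf {Ω : Type*} [MeasurableSpace Ω]
    (P : Measure Ω) [IsProbabilityMeasure P] {κ : ℝ} {X : ℝ → Ω → ℝ}
    (hmeas : Measurable fun p : ℝ × Ω => X p.1 p.2)
    (hss : ∀ t : ℝ, 0 < t → Measure.map (X t) P = Measure.map (fun ω => t ^ κ * X 1 ω) P)
    (u : ℝ) :
    ∫ ω, (∫ t in (0 : ℝ)..1, {t | u < X t ω}.indicator (fun _ => (1 : ℝ)) t) ∂P =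
      ∫ t in Ioo 0 1, (1 - cdf (P.map (X 1)) (u * t ^ (-κ))) := by
  have hX : ∀ t, Measurable (X t) := fun t => hmeas.comp (measurable_const.prodMk measurable_id)
  have htail : ∀ t, 0 < t →
      P.real {ω | u < X t ω} = 1 - cdf (P.map (X 1)) (u * t ^ (-κ)) := by
    intro t ht
    have hpre : (t ^ κ * ·) ⁻¹' Ioi u = Ioi (u * t ^ (-κ)) := by
      rw [preimage_const_mul_Ioi₀ _ (rpow_pos_of_pos ht κ), rpow_neg ht.le, div_eq_mul_inv]
    calc P.real {ω | u < X t ω} = (P.map (X t)).real (Ioi u) :=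
          (map_measureReal_apply (hX t) measurableSet_Ioi).symm
      _ = (P.map (X 1)).real (Ioi (u * t ^ (-κ))) := by
          rw [hss t ht, ← hpre,
            ← map_measureReal_apply (measurable_const_mul _) measurableSet_Ioi,
            Measure.map_map (measurable_const_mul _) (hX 1)]
          rfl
      _ = 1 - cdf (P.map (X 1)) (u * t ^ (-κ)) := by
          have := Measure.isProbabilityMeasure_map (μ := P) (hX 1).aemeasurable
          rw [← compl_Iic, probReal_compl_eq_one_sub measurableSet_Iic, cdf_eq_real]
  have hint : Integrable
      (Function.uncurry fun ω t => {t | u < X t ω}.indicator (fun _ => (1 : ℝ)) t)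
      (P.prod (volume.restrict (Ioc 0 1))) :=
    (integrable_const (1 : ℝ)).indicator
      (measurableSet_lt measurable_const (hmeas.comp measurable_swap))
  simp_rw [intervalIntegral.integral_of_le zero_le_one]
  rw [integral_integral_swap hint, integral_Ioc_eq_integral_Ioo]
  refine setIntegral_congr_fun measurableSet_Ioo fun t ht => ?_
  rw [← htail t ht.1, ← integral_indicator_one (measurableSet_lt measurable_const (hX t))]
  rfl

theorem mean_sojourn_asymptotics_general {Ω : Type*} [MeasurableSpace Ω] (P : Measure Ω)
    [IsProbabilityMeasure P] (κ : ℝ) (hκ : 0 < κ)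
    (X : ℝ → Ω → ℝ) (hmeas : Measurable fun p : ℝ × Ω => X p.1 p.2)
    (hss : ∀ t : ℝ, 0 < t →
        Measure.map (X t) P = Measure.map (fun ω => t ^ κ * X 1 ω) P)
    (G w : ℝ → ℝ) (hw : ∀ u, 0 < w u)
    (hdf : ∀ u, (P {ω | X 1 ω ≤ u}).toReal = G u)
    (hGum : ∀ x : ℝ, Tendsto (fun u => (1 - G (u + x / w u)) / (1 - G u))
        atTop (nhds (Real.exp (-x)))) :
    Tendsto (fun u : ℝ =>
        (∫ ω, (∫ t in (0:ℝ)..1, Set.indicator {t | u < X t ω} (fun _ => (1:ℝ)) t) ∂P) *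
          (κ * u * w u) / (1 - G u))
      atTop (nhds 1) := by
  have hX1 : Measurable (X 1) := hmeas.comp (measurable_const.prodMk measurable_id)
  have := Measure.isProbabilityMeasure_map (μ := P) hX1.aemeasurable
  have hG : G = cdf (P.map (X 1)) := funext fun u => by
    rw [← hdf u, cdf_eq_real, map_measureReal_apply hX1 measurableSet_Iic]
    rfl
  subst hG
  have hf_anti : Antitone fun v => 1 - cdf (P.map (X 1)) v :=
    fun a b hab => sub_le_sub_left ((cdf _).mono hab) 1
  have hf0 : Tendsto (fun v => 1 - cdf (P.map (X 1)) v) atTop (𝓝 0) := by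
    simpa using (tendsto_cdf_atTop _).const_sub 1
  have hf : IsGumbelTail (fun v => 1 - cdf (P.map (X 1)) v) w := hGum
  have hf_pos := hf.pos (fun v => sub_nonneg.2 (cdf_le_one _ v)) hf_anti
  exact (hf.tendsto_integral_Ioo_comp_rpow_neg hw hf_pos hf_anti hf0 hκ).congr fun u => by
    rw [integral_sojourn_eq_integral_one_sub_cdf P hmeas hss]

/-- For a self-similar process `X` with index `κ > 0` whose marginal `X(1)` has df `G`
in the Gumbel MDA with auxiliary function `w`, the mean sojourn time
`L(u) = ∫_0^1 1{X(t) > u} dt` satisfies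
`E[L(u)] = (1-G(u))/(κ u w(u)) · (1+o(1))` as `u → ∞`. -/
theorem mean_sojourn_asymptotics {Ω : Type*} [MeasurableSpace Ω] (P : Measure Ω)
    [IsProbabilityMeasure P] (κ : ℝ) (hκ : 0 < κ)
    (X : ℝ → Ω → ℝ) (hmeas : Measurable fun p : ℝ × Ω => X p.1 p.2)
    (hss : ∀ t : ℝ, 0 < t →
        Measure.map (X t) P = Measure.map (fun ω => t ^ κ * X 1 ω) P)
    (G w : ℝ → ℝ) (hw : ∀ u, 0 < w u)
    (hdf : ∀ u, (P {ω | X 1 ω ≤ u}).toReal = G u)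
    (hGcont : Continuous G) (hGlt : ∀ u, G u < 1)
    (hGum : ∀ x : ℝ, Tendsto (fun u => (1 - G (u + x / w u)) / (1 - G u))
        atTop (nhds (Real.exp (-x)))) :
    Tendsto (fun u : ℝ =>
        (∫ ω, (∫ t in (0:ℝ)..1, Set.indicator {t | u < X t ω} (fun _ => (1:ℝ)) t) ∂P) *
          (κ * u * w u) / (1 - G u))
      atTop (nhds 1) :=
  mean_sojourn_asymptotics_general P κ hκ X hmeas hss G w hw hdf hGum
end

section
/- Let K(s,t) = (1/2^k)((s^{2h}+t^{2h})^k − |s−t|^{2hk}) be the covariance of bi-fractional Brownian motion with h ∈ (0,1), k ∈ (0,1], κ = hk. Then the Lamperti transform covariance r(t) = e^{−κt} K(1, e^t) satisfies r(t) = 1 − 2^{−k} t^{2hk} + o(|t| + |t|^{2hk}) as t → 0. -/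
/-!
The Lamperti covariance splits into a smooth and a singular part. The smooth part
`e^{-hkt} 2^{-k} (1 + e^{2ht})^k` is exactly `cosh(ht)^k`, which equals `1` and has derivative `0`
at `0`, so it is `1 + o(t)`. The singular part `e^{-hkt} 2^{-k} |1 - e^t|^{2hk}`
is asymptotically equivalent to `2^{-k} |t|^{2hk}`, because `e^t - 1 ~ t` and
`|·|^p` preserves asymptotic equivalence.
-/

open Asymptotics Filter Real Topology

theorem Asymptotics.IsEquivalent.abs_rpow {α : Type*} {l : Filter α} {u v : α → ℝ}
    (huv : u ~[l] v) (p : ℝ) : (fun x => |u x| ^ p) ~[l] fun x => |v x| ^ p := by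
  obtain ⟨φ, hφ, hu⟩ := huv.exists_eq_mul
  refine isEquivalent_iff_exists_eq_mul.mpr ⟨fun x => |φ x| ^ p, ?_, ?_⟩
  · simpa using hφ.abs.rpow_const (p := p) (Or.inl (by simp))
  · filter_upwards [hu] with x hx
    simp only [hx, Pi.mul_apply, abs_mul, mul_rpow (abs_nonneg _) (abs_nonneg _)]

theorem Real.isEquivalent_exp_sub_one : (fun t : ℝ => exp t - 1) ~[𝓝 0] fun t => t := by
  have := hasDerivAt_iff_isLittleO.mp (hasDerivAt_exp 0)
  simp only [exp_zero, sub_zero, smul_eq_mul, mul_one] at this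
  exact this

theorem isEquivalent_exp_mul_abs_one_sub_exp_rpow (a p : ℝ) :
    (fun t : ℝ => exp (a * t) * |1 - exp t| ^ p) ~[𝓝 0] fun t => |t| ^ p := by
  have hexp : (fun t : ℝ => exp (a * t)) ~[𝓝 0] fun _ => 1 :=
    (isEquivalent_const_iff_tendsto one_ne_zero).mpr <| by
      simpa using (continuous_const.mul continuous_id).rexp.tendsto 0
  have hpow : (fun t : ℝ => |1 - exp t| ^ p) ~[𝓝 0] fun t => |t| ^ p := by
    simpa [abs_sub_comm] using isEquivalent_exp_sub_one.abs_rpow p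
  simpa [Pi.mul_def] using hexp.mul hpow

theorem exp_mul_one_add_exp_rpow_div_two_rpow_eq_cosh_rpow (h k t : ℝ) :
    exp (-(h * k) * t) * ((1 / 2 ^ k) * (1 + exp t ^ (2 * h)) ^ k) = cosh (h * t) ^ k := by
  have hexp : exp (-(h * k) * t) = exp (-(h * t)) ^ k := by
    rw [← exp_mul]; ring_nf
  have hcosh : cosh (h * t) = exp (-(h * t)) * ((1 / 2) * (1 + exp t ^ (2 * h))) := by
    have : exp (-(h * t)) * exp t ^ (2 * h) = exp (h * t) := by
      rw [← exp_mul, ← exp_add]; ring_nf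
    rw [cosh_eq]
    linear_combination (-1 / 2 : ℝ) * this
  rw [hexp, hcosh, mul_rpow (exp_pos _).le (by positivity), mul_rpow (by norm_num) (by positivity),
    div_rpow zero_le_one zero_le_two, one_rpow]

theorem isLittleO_cosh_mul_rpow_sub_one (h k : ℝ) :
    (fun t : ℝ => cosh (h * t) ^ k - 1) =o[𝓝 0] fun t => t := by
  have hd : HasDerivAt (fun t : ℝ => cosh (h * t) ^ k) 0 0 := by
    simpa using ((hasDerivAt_id (0 : ℝ)).const_mul h).cosh.rpow_const
      (p := k) (Or.inl (by simp))
  simpa using hasDerivAt_iff_isLittleO.mp hd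

theorem bifBm_lamperti_cov_expansion_general (h k : ℝ) :
    (fun t : ℝ =>
        Real.exp (-(h * k) * t) *
            ((1 / 2 ^ k) * ((1 + Real.exp t ^ (2 * h)) ^ k -
              |1 - Real.exp t| ^ (2 * h * k))) -
          (1 - 2 ^ (-k) * |t| ^ (2 * h * k)))
      =o[nhds (0:ℝ)] fun t : ℝ => |t| + |t| ^ (2 * h * k) := by
  have hsmooth := isLittleO_cosh_mul_rpow_sub_one h k
  have hsingular := (isEquivalent_exp_mul_abs_one_sub_exp_rpow (-(h * k)) (2 * h * k)).isLittleO
    |>.const_mul_left (2 ^ (-k))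
  refine (hsmooth.add_add hsingular.neg_left).congr' ?_ ?_
  · filter_upwards with t
    rw [← exp_mul_one_add_exp_rpow_div_two_rpow_eq_cosh_rpow, rpow_neg zero_le_two]
    simp only [Pi.sub_apply]
    ring
  · filter_upwards with t
    simp [abs_of_nonneg (rpow_nonneg (abs_nonneg t) _)]

/-- For the bi-fractional Brownian motion covariance
`K(s,t) = 2^{-k}((s^{2h}+t^{2h})^k - |s-t|^{2hk})` with `κ = hk`, the Lamperti
transform covariance `r(t) = e^{-κt} K(1, e^t)` satisfies
`r(t) = 1 - 2^{-k} |t|^{2hk} + o(|t| + |t|^{2hk})` as `t → 0`. -/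
theorem bifBm_lamperti_cov_expansion (h k : ℝ) (hh0 : 0 < h) (hh1 : h < 1)
    (hk0 : 0 < k) (hk1 : k ≤ 1) :
    (fun t : ℝ =>
        Real.exp (-(h * k) * t) *
            ((1 / 2 ^ k) * ((1 + Real.exp t ^ (2 * h)) ^ k -
              |1 - Real.exp t| ^ (2 * h * k))) -
          (1 - 2 ^ (-k) * |t| ^ (2 * h * k)))
      =o[nhds (0:ℝ)] fun t : ℝ => |t| + |t| ^ (2 * h * k) :=
  bifBm_lamperti_cov_expansion_general h k
end

section
/- Let K(s,t) = s^{2h} + t^{2h} − ((s+t)^{2h} + |s−t|^{2h})/2, h ∈ (0,1), be the covariance of sub-fractional Brownian motion. Then the Lamperti transform covariance r(t) = e^{−ht} K(1, e^t) satisfies r(t) = (2 − 2^{2h−1})·(1 − t^{2h}/(2(2−2^{2h−1})) + o(|t| + |t|^{2h})) as t → 0. -/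
/-!
Factoring `e^{-t/2}` out of `1`, `e^t`, `1 + e^t` and `|1 - e^t|` turns the Lamperti covariance
into `2 cosh (h t) - (2 cosh (t/2))^{2h} / 2 - |2 sinh (t/2)|^{2h} / 2`. The first two terms form
an even function, differentiable at `0` with value `2 - 2^{2h-1}` there, so they differ from that
value by `o(t)`; and `2 sinh (t/2) ~ t`, so the last term is `|t|^{2h} / 2 + o(|t|^{2h})`.
-/

open Asymptotics Filter Real
open scoped Topology

theorem Function.Even.deriv_zero {f : ℝ → ℝ} (hf : Function.Even f) : deriv f 0 = 0 := by
  have h := deriv_comp_neg (f := f) (x := 0)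
  simp only [hf _, neg_zero] at h
  linarith

theorem Asymptotics.IsEquivalent.abs {α : Type*} {l : Filter α} {u v : α → ℝ}
    (h : u ~[l] v) : (fun x ↦ |u x|) ~[l] fun x ↦ |v x| := by
  have hdiff : (fun x ↦ |u x| - |v x|) =O[l] (u - v) :=
    isBigO_of_le l fun x ↦ by simpa using abs_abs_sub_abs_le_abs_sub (u x) (v x)
  exact hdiff.trans_isLittleO (h.isLittleO.trans_isBigO (isBigO_abs_right.mpr (isBigO_refl v l)))

namespace Real

theorem isEquivalent_two_mul_sinh_half : (fun t ↦ 2 * sinh (t / 2)) ~[𝓝 0] id := by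
  have hhalf : Tendsto (fun t : ℝ ↦ t / 2) (𝓝 0) (𝓝 0) := by
    simpa using (continuous_id.div_const (2 : ℝ)).tendsto 0
  refine (IsEquivalent.refl.mul (isEquivalent_sinh.comp_tendsto hhalf)).congr_right ?_
  exact Eventually.of_forall fun t ↦ by simp only [Pi.mul_apply, Function.comp_apply, id]; ring

theorem exp_neg_half_mul_one_add_exp (t : ℝ) :
    exp (-(t / 2)) * (1 + exp t) = 2 * cosh (t / 2) := by
  rw [cosh_eq, mul_add, mul_one, ← exp_add]
  ring_nf

theorem exp_neg_half_mul_abs_one_sub_exp (t : ℝ) :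
    exp (-(t / 2)) * |1 - exp t| = |2 * sinh (t / 2)| :=
  calc exp (-(t / 2)) * |1 - exp t| = |exp (-(t / 2)) * (1 - exp t)| := by
        rw [abs_mul, abs_of_pos (exp_pos _)]
    _ = |-(2 * sinh (t / 2))| := by
        rw [sinh_eq, mul_sub, mul_one, ← exp_add]
        ring_nf
    _ = |2 * sinh (t / 2)| := abs_neg _

end Real

theorem lamperti_subfBm_cov_eq_hyperbolic (h t : ℝ) :
    exp (-h * t) * (1 + exp t ^ (2 * h) - ((1 + exp t) ^ (2 * h) + |1 - exp t| ^ (2 * h)) / 2) =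
      2 * cosh (h * t) - ((2 * cosh (t / 2)) ^ (2 * h) + |2 * sinh (t / 2)| ^ (2 * h)) / 2 := by
  have hscale : ∀ a : ℝ, 0 ≤ a → exp (-h * t) * a ^ (2 * h) = (exp (-(t / 2)) * a) ^ (2 * h) := by
    intro a ha
    rw [mul_rpow (exp_pos _).le ha, ← exp_mul]
    ring_nf
  have hexp : exp (-(t / 2)) * exp t = exp (t / 2) := by
    rw [← exp_add]
    ring_nf
  calc _ = exp (-h * t) + exp (-h * t) * exp t ^ (2 * h) -
          (exp (-h * t) * (1 + exp t) ^ (2 * h) + exp (-h * t) * |1 - exp t| ^ (2 * h)) / 2 := by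
        ring
    _ = _ := by
        rw [hscale _ (exp_pos t).le, hscale _ (by positivity), hscale _ (abs_nonneg _), hexp,
          exp_neg_half_mul_one_add_exp, exp_neg_half_mul_abs_one_sub_exp, ← exp_mul,
          cosh_eq (h * t)]
        ring_nf

theorem isLittleO_two_mul_cosh_sub_rpow_two_mul_cosh_half (h : ℝ) :
    (fun t ↦ 2 * cosh (h * t) - (2 * cosh (t / 2)) ^ (2 * h) / 2 - (2 - 2 ^ (2 * h - 1)))
      =o[𝓝 0] fun t ↦ t := by
  set F : ℝ → ℝ := fun t ↦ 2 * cosh (h * t) - (2 * cosh (t / 2)) ^ (2 * h) / 2 with hF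
  have hF0 : F 0 = 2 - 2 ^ (2 * h - 1) := by
    simp only [hF, mul_zero, zero_div, cosh_zero, mul_one, rpow_sub two_pos, rpow_one]
  have hdiff : DifferentiableAt ℝ F 0 := by fun_prop (disch := positivity)
  have heven : Function.Even F := fun t ↦ by simp only [hF, mul_neg, neg_div, cosh_neg]
  rw [← hF0]
  simpa [heven.deriv_zero] using hdiff.hasDerivAt.isLittleO

theorem subfBm_lamperti_cov_expansion_general (h : ℝ) (hh1 : h < 1) :
    (fun t : ℝ =>
        Real.exp (-h * t) *
            (1 + Real.exp t ^ (2 * h) -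
              ((1 + Real.exp t) ^ (2 * h) + |1 - Real.exp t| ^ (2 * h)) / 2) -
          (2 - 2 ^ (2 * h - 1)) *
            (1 - |t| ^ (2 * h) / (2 * (2 - 2 ^ (2 * h - 1)))))
      =o[nhds (0:ℝ)] fun t : ℝ => |t| + |t| ^ (2 * h) := by
  have hc : (2 : ℝ) - 2 ^ (2 * h - 1) ≠ 0 := by
    have : (2 : ℝ) ^ (2 * h - 1) < 2 ^ (1 : ℝ) :=
      rpow_lt_rpow_of_exponent_lt one_lt_two (by linarith)
    rw [rpow_one] at this
    linarith
  have hsing : (fun t ↦ |2 * sinh (t / 2)| ^ (2 * h) - |t| ^ (2 * h)) =o[𝓝 0]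
      fun t ↦ |t| ^ (2 * h) :=
    (isEquivalent_two_mul_sinh_half.abs.rpow fun t ↦ abs_nonneg t).isLittleO
  have hnorm : ∀ t : ℝ, ‖‖t‖ + ‖|t| ^ (2 * h)‖‖ ≤ ‖|t| + |t| ^ (2 * h)‖ := fun t ↦ by
    simp [abs_of_nonneg, rpow_nonneg]
  refine (((isLittleO_two_mul_cosh_sub_rpow_two_mul_cosh_half h).add_add
    (hsing.const_mul_left (-(1 / 2)))).trans_le hnorm).congr_left fun t ↦ ?_
  rw [lamperti_subfBm_cov_eq_hyperbolic]
  field_simp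
  ring

/-- For the sub-fractional Brownian motion covariance
`K(s,t) = s^{2h} + t^{2h} - ((s+t)^{2h} + |s-t|^{2h})/2`, the Lamperti transform
covariance `r(t) = e^{-ht} K(1, e^t)` satisfies
`r(t) = (2 - 2^{2h-1})(1 - |t|^{2h}/(2(2-2^{2h-1})) + o(|t| + |t|^{2h}))` as `t → 0`. -/
theorem subfBm_lamperti_cov_expansion (h : ℝ) (hh0 : 0 < h) (hh1 : h < 1) :
    (fun t : ℝ =>
        Real.exp (-h * t) *
            (1 + Real.exp t ^ (2 * h) -
              ((1 + Real.exp t) ^ (2 * h) + |1 - Real.exp t| ^ (2 * h)) / 2) -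
          (2 - 2 ^ (2 * h - 1)) *
            (1 - |t| ^ (2 * h) / (2 * (2 - 2 ^ (2 * h - 1)))))
      =o[nhds (0:ℝ)] fun t : ℝ => |t| + |t| ^ (2 * h) :=
  subfBm_lamperti_cov_expansion_general h hh1
end
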